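/- Let E ⊆ F_2^r \ {0} be triangle-free and I_5-free, and let F be a 4-dimensional subspace of F_2^r such that E ∩ F is an induced 5-circuit (five distinct vectors x_1,...,x_5 with x_1+...+x_5 = 0, any four linearly independent, and E ∩ F = {x_1,...,x_5}). Then the contraction of E by F is I_3-free: there do not exist three cosets A_1, A_2, A_3 of F in F_2^r, each meeting E, such that A_1, A_2, A_3 are linearly independent in the quotient F_2^r / F and no coset of F corresponding to a nonzero sum of two or three of the classes A_1, A_2, A_3 in the quotient meets E. -/

import Mathlib

/-!
Above each `t` in the independent triple `T`, let `A_t` be the part of `E` lying in the coset `t`.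
Call a pair `{x, y}` of the circuit bad for `t` when translation by `x + y` maps `A_t` into
itself. These translations form a monoid, which contains no circuit element because `E` is
triangle-free. As the circuit sums to zero, two disjoint bad pairs would make the fifth element
bad, so the bad pairs for `t` all lie in one set of at most three elements, and there are at most
three of them. Since `3 * 3 < 10`, some pair `{x, y}` is good for every `t`: there are `e_t ∈ A_t`
with `e_t + x + y ∉ E`, and then `{e_t} ∪ {x, y}` is an induced `I_5` in `E`.
-/

open Submodule

abbrev V2 (r : ℕ) := Fin r → ZMod 2

def TriangleFree {r : ℕ} (E : Set (V2 r)) : Prop :=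
  ∀ a ∈ E, ∀ b ∈ E, a + b ∉ E

def IFree {r : ℕ} (n : ℕ) (E : Set (V2 r)) : Prop :=
  ¬ ∃ S : Finset (V2 r), S.card = n ∧
      LinearIndependent (ZMod 2) (Subtype.val : ↥(S : Set (V2 r)) → V2 r) ∧
      E ∩ (span (ZMod 2) (S : Set (V2 r)) : Set (V2 r)) = (S : Set (V2 r))

def IFreeG (n : ℕ) {W : Type*} [AddCommGroup W] [Module (ZMod 2) W] (E : Set W) : Prop :=
  ¬ ∃ S : Finset W, S.card = n ∧
      LinearIndependent (ZMod 2) (Subtype.val : ↥(S : Set W) → W) ∧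
      E ∩ (span (ZMod 2) (S : Set W) : Set W) = (S : Set W)

open Finset

theorem zmod_two_eq_zero_or_one (a : ZMod 2) : a = 0 ∨ a = 1 := by
  decide +revert

theorem mem_span_pair_zmod_two {V : Type*} [AddCommGroup V] [Module (ZMod 2) V] {x y f : V}
    (hf : f ∈ span (ZMod 2) {x, y}) : f = 0 ∨ f = x ∨ f = y ∨ f = x + y := by
  obtain ⟨a, b, rfl⟩ := mem_span_pair.mp hf
  obtain rfl | rfl := zmod_two_eq_zero_or_one a
  all_goals obtain rfl | rfl := zmod_two_eq_zero_or_one b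
  all_goals simp

theorem linearIndepOn_pair_zmod_two {V : Type*} [AddCommGroup V] [Module (ZMod 2) V] {x y : V}
    (hx : x ≠ 0) (hy : y ≠ 0) (hxy : x ≠ y) : LinearIndepOn (ZMod 2) id {x, y} :=
  linearIndepOn_id_pair hx fun a => by
    obtain rfl | rfl := zmod_two_eq_zero_or_one a
    exacts [by simpa using hy.symm, by simpa using hxy]

section Circuit

variable {V : Type*} [AddCommGroup V] [Module (ZMod 2) V] {S : Finset V} {M : AddSubmonoid V}

theorem add_notMem_of_disjoint_add_mem (hS : #S = 5) (hsum : ∑ x ∈ S, x = 0)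
    (hM : ∀ z ∈ S, z ∉ M) {a b c d : V} (ha : a ∈ S) (hb : b ∈ S) (hc : c ∈ S) (hd : d ∈ S)
    (hab : a ≠ b) (hac : a ≠ c) (had : a ≠ d) (hbc : b ≠ c) (hbd : b ≠ d) (hcd : c ≠ d)
    (habM : a + b ∈ M) : c + d ∉ M := by
  classical
  intro hcdM
  have hb' : b ∈ S.erase a := mem_erase.2 ⟨hab.symm, hb⟩
  have hc' : c ∈ (S.erase a).erase b := by simp [hc, hac.symm, hbc.symm]
  have hd' : d ∈ ((S.erase a).erase b).erase c := by simp [hd, had.symm, hbd.symm, hcd.symm]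
  obtain ⟨z, hrest⟩ := card_eq_one.mp (show #((((S.erase a).erase b).erase c).erase d) = 1 by
    simp [card_erase_of_mem, ha, hb', hc', hd', hS])
  have hzS : z ∈ S := by
    have : z ∈ (((S.erase a).erase b).erase c).erase d := hrest ▸ mem_singleton_self z
    simp only [mem_erase] at this
    exact this.2.2.2.2
  rw [← add_sum_erase S _ ha, ← add_sum_erase _ _ hb', ← add_sum_erase _ _ hc',
    ← add_sum_erase _ _ hd', hrest, sum_singleton] at hsum
  -- in characteristic two the fifth element is the sum of the other four
  have hz : z = a + b + (c + d) := by
    rw [← ZModModule.neg_eq_self z, neg_eq_iff_add_eq_zero, ← hsum]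
    abel
  exact hM z hzS (hz ▸ add_mem habM hcdM)

theorem exists_card_le_three_of_add_mem (hS : #S = 5) (hsum : ∑ x ∈ S, x = 0)
    (hM : ∀ z ∈ S, z ∉ M) :
    ∃ C ⊆ S, #C ≤ 3 ∧ ∀ x ∈ S, ∀ y ∈ S, x ≠ y → x + y ∈ M → x ∈ C ∧ y ∈ C := by
  classical
  by_cases h : ∃ a ∈ S, ∃ b ∈ S, a ≠ b ∧ a + b ∈ M
  swap
  · push Not at h
    exact ⟨∅, empty_subset _, by simp, fun x hx y hy hxy hxyM => absurd hxyM (h x hx y hy hxy)⟩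
  obtain ⟨a, ha, b, hb, hab, habM⟩ := h
  have htrans {u v : V} (hu : a + u ∈ M) (huv : u + v ∈ M) : a + v ∈ M :=
    ZModModule.add_add_add_cancel a u v ▸ add_mem hu huv
  -- `C` is the class of `a` for the equivalence relation `x + y ∈ M`
  refine ⟨S.filter (a + · ∈ M), filter_subset _ _, ?_, ?_⟩
  · by_contra! hC
    have haC : a ∈ S.filter (a + · ∈ M) := mem_filter.2 ⟨ha, by simp [ZModModule.add_self]⟩
    obtain ⟨p, q, s, hp, hq, hs, hpq, hps, hqs⟩ :=
      two_lt_card_iff.mp (show 2 < #((S.filter (a + · ∈ M)).erase a) by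
        rw [card_erase_of_mem haC]; omega)
    simp only [mem_erase, mem_filter] at hp hq hs
    have hqsM : q + s ∈ M := ZModModule.add_add_add_cancel q a s ▸
      add_mem (add_comm a q ▸ hq.2.2) hs.2.2
    exact add_notMem_of_disjoint_add_mem hS hsum hM ha hp.2.1 hq.2.1 hs.2.1
      (Ne.symm hp.1) (Ne.symm hq.1) (Ne.symm hs.1) hpq hps hqs hp.2.2 hqsM
  · intro x hx y hy hxy hxyM
    have hpair {u : V} (hu : u = a ∨ u = b) : a + u ∈ M := by
      rcases hu with rfl | rfl
      · simp [ZModModule.add_self]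
      · exact habM
    have hmeet : (x = a ∨ x = b) ∨ (y = a ∨ y = b) := by
      by_contra! hne
      exact add_notMem_of_disjoint_add_mem hS hsum hM ha hb hx hy hab (Ne.symm hne.1.1)
        (Ne.symm hne.2.1) (Ne.symm hne.1.2) (Ne.symm hne.2.2) hxy habM hxyM
    simp only [mem_filter, hx, hy, true_and]
    rcases hmeet with hxab | hyab
    · exact ⟨hpair hxab, htrans (hpair hxab) hxyM⟩
    · exact ⟨htrans (hpair hyab) (add_comm x y ▸ hxyM), hpair hyab⟩

theorem exists_pair_add_notMem {ι : Type*} (hS : #S = 5) (hsum : ∑ x ∈ S, x = 0)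
    (T : Finset ι) (hT : #T ≤ 3) (M : ι → AddSubmonoid V) (hM : ∀ i ∈ T, ∀ z ∈ S, z ∉ M i) :
    ∃ x ∈ S, ∃ y ∈ S, x ≠ y ∧ ∀ i ∈ T, x + y ∉ M i := by
  classical
  choose! C hCS hC3 hC using fun i hi => exists_card_le_three_of_add_mem hS hsum (hM i hi)
  have hcard : #(T.biUnion fun i => (C i).powersetCard 2) < #(S.powersetCard 2) :=
    calc #(T.biUnion fun i => (C i).powersetCard 2)
        ≤ ∑ i ∈ T, #((C i).powersetCard 2) := card_biUnion_le
      _ ≤ ∑ _i ∈ T, 3 := sum_le_sum fun i hi => by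
          rw [card_powersetCard]
          exact (Nat.choose_le_choose 2 (hC3 i hi)).trans_eq rfl
      _ < #(S.powersetCard 2) := by
          rw [sum_const, smul_eq_mul, card_powersetCard, hS]
          change #T * 3 < 10
          omega
  obtain ⟨p, hp, hpC⟩ := exists_mem_notMem_of_card_lt_card hcard
  obtain ⟨hpS, hp2⟩ := mem_powersetCard.mp hp
  obtain ⟨x, y, hxy, rfl⟩ := card_eq_two.mp hp2
  refine ⟨x, hpS (by simp), y, hpS (by simp), hxy, fun i hi hxyM => hpC ?_⟩
  obtain ⟨hx, hy⟩ := hC i hi x (hpS (by simp)) y (hpS (by simp)) hxy hxyM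
  exact mem_biUnion.mpr ⟨i, hi, mem_powersetCard.mpr ⟨insert_subset hx (by simpa using hy), hp2⟩⟩

end Circuit

def shiftStabilizer {V : Type*} [AddMonoid V] (A : Set V) : AddSubmonoid V where
  carrier := {d | ∀ a ∈ A, a + d ∈ A}
  zero_mem' a ha := by rwa [add_zero]
  add_mem' hd hd' a ha := by rw [← add_assoc]; exact hd' _ (hd a ha)

theorem notMem_shiftStabilizer {V : Type*} [AddMonoid V] {E A : Set V}
    (hTF : ∀ a ∈ E, ∀ b ∈ E, a + b ∉ E) (hAE : A ⊆ E) (hA : A.Nonempty) {z : V} (hz : z ∈ E) :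
    z ∉ shiftStabilizer A := fun hzA =>
  hTF _ (hAE hA.some_mem) z hz (hAE (hzA _ hA.some_mem))

theorem exists_add_notMem_of_notMem_shiftStabilizer {R V : Type*} [Ring R] [AddCommGroup V]
    [Module R V] {F : Submodule R V} {E : Set V} {t : V ⧸ F} {d : V} (hd : d ∈ F)
    (h : d ∉ shiftStabilizer {e ∈ E | F.mkQ e = t}) : ∃ e ∈ E, F.mkQ e = t ∧ e + d ∉ E := by
  obtain ⟨e, ⟨he, het⟩, hed⟩ := not_forall₂.mp h
  refine ⟨e, he, het, fun h => hed ⟨h, ?_⟩⟩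
  rw [map_add, show F.mkQ d = 0 from (Quotient.mk_eq_zero F).mpr hd, add_zero, het]

section Lift

variable {R V : Type*} [Ring R] [AddCommGroup V] [Module R V] {F : Submodule R V}
  {T : Set (V ⧸ F)} {e : V ⧸ F → V}

theorem disjoint_span_image_of_mkQ_eq (hT : LinearIndepOn R id T)
    (he : ∀ t ∈ T, F.mkQ (e t) = t) : Disjoint (span R (e '' T)) F := by
  have hcomp : LinearIndependent R (F.mkQ ∘ fun t : T => e t) :=
    hT.congr fun t ht => (he t ht).symm
  simpa [Set.image_eq_range] using Submodule.range_ker_disjoint hcomp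

theorem mkQ_image_image_eq (he : ∀ t ∈ T, F.mkQ (e t) = t) : F.mkQ '' (e '' T) = T := by
  rw [Set.image_image, Set.image_congr he, Set.image_id']

theorem linearIndepOn_image_union {s : Set V} (hT : LinearIndepOn R id T)
    (he : ∀ t ∈ T, F.mkQ (e t) = t) (hs : LinearIndepOn R id s) (hsF : s ⊆ F) :
    LinearIndepOn R id (e '' T ∪ s) := by
  have hTe : LinearIndepOn R (F.mkQ ∘ e) T := hT.congr fun t ht => (he t ht).symm
  exact (hTe.of_comp F.mkQ).id_image.id_union hs
    ((disjoint_span_image_of_mkQ_eq hT he).mono_right (span_le.mpr hsF))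

theorem card_image_union_of_mkQ_eq [Nontrivial R] [DecidableEq V] {T : Finset (V ⧸ F)}
    (hT : LinearIndepOn R id (T : Set (V ⧸ F))) (he : ∀ t ∈ T, F.mkQ (e t) = t) {s : Finset V}
    (hsF : (s : Set V) ⊆ F) : #(T.image e ∪ s) = #T + #s := by
  rw [card_union_eq_card_add_card.mpr, card_image_of_injOn]
  · intro a ha b hb hab
    rw [← he a ha, ← he b hb]
    exact congrArg F.mkQ hab
  · rw [disjoint_left]
    rintro _ hT' hs
    obtain ⟨t, ht, rfl⟩ := mem_image.mp hT'
    exact hT.ne_zero ht (he t ht ▸ (Quotient.mk_eq_zero F).mpr (hsF hs))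

end Lift

section InducedLift

variable {V : Type*} [AddCommGroup V] [Module (ZMod 2) V] {F : Submodule (ZMod 2) V}
  {T : Set (V ⧸ F)} {e : V ⧸ F → V} {E : Set V}

theorem inter_span_image_union_pair_eq (h0 : 0 ∉ E) (hTF : ∀ a ∈ E, ∀ b ∈ E, a + b ∉ E)
    (hT : (F.mkQ '' E \ {0}) ∩ span (ZMod 2) T = T) (hTind : LinearIndepOn (ZMod 2) id T)
    (heE : ∀ t ∈ T, e t ∈ E) (he : ∀ t ∈ T, F.mkQ (e t) = t) {x y : V} (hx : x ∈ E)
    (hy : y ∈ E) (hxF : x ∈ F) (hyF : y ∈ F) (hexy : ∀ t ∈ T, e t + (x + y) ∉ E) :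
    E ∩ span (ZMod 2) (e '' T ∪ {x, y}) = e '' T ∪ {x, y} := by
  refine subset_antisymm ?_ (Set.subset_inter
    (Set.union_subset (Set.image_subset_iff.mpr heE) (Set.pair_subset hx hy)) subset_span)
  rintro _ ⟨huE, hu⟩
  rw [span_union] at hu
  obtain ⟨w, hw, f, hf, rfl⟩ := Submodule.mem_sup.mp hu
  have hfF : f ∈ F := span_le.mpr (Set.pair_subset hxF hyF) hf
  have hmk : F.mkQ (w + f) = F.mkQ w := by
    rw [map_add, show F.mkQ f = 0 from (Quotient.mk_eq_zero F).mpr hfF, add_zero]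
  have hinj : Set.InjOn F.mkQ (span (ZMod 2) (e '' T)) :=
    LinearMap.injOn_of_disjoint_ker le_rfl
      (by rw [ker_mkQ]; exact disjoint_span_image_of_mkQ_eq hTind he)
  -- `w` is determined by its image in the quotient, which is `0` or a point of `T`
  have hw' : w = 0 ∨ ∃ t ∈ T, w = e t := by
    by_cases hq : F.mkQ w = 0
    · exact Or.inl (hinj hw (zero_mem _) (by rw [hq, map_zero]))
    have hwT : F.mkQ w ∈ T := by
      rw [← hT]
      refine ⟨⟨⟨w + f, huE, hmk⟩, hq⟩, ?_⟩
      rw [← mkQ_image_image_eq he, ← map_span]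
      exact mem_map_of_mem hw
    exact Or.inr ⟨_, hwT, hinj hw (subset_span ⟨_, hwT, rfl⟩) (he _ hwT).symm⟩
  rcases mem_span_pair_zmod_two hf with rfl | rfl | rfl | rfl <;>
    rcases hw' with rfl | ⟨t, ht, rfl⟩
  · exact absurd (by simpa using huE) h0
  · exact Or.inl ⟨t, ht, (add_zero _).symm⟩
  · exact Or.inr (by simp)
  · exact absurd huE (hTF _ (heE t ht) _ hx)
  · exact Or.inr (by simp)
  · exact absurd huE (hTF _ (heE t ht) _ hy)
  · exact absurd (by simpa using huE) (hTF _ hx _ hy)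
  · exact absurd huE (hexy t ht)

end InducedLift

theorem stmt13_general {r : ℕ} (E : Set (V2 r)) (h0 : (0 : V2 r) ∉ E)
    (hTF : TriangleFree E) (hI5 : IFree 5 E)
    (F : Submodule (ZMod 2) (V2 r))
    (S : Finset (V2 r)) (hS5 : S.card = 5)
    (hsum : (∑ x ∈ S, x) = 0)
    (hEF : E ∩ (F : Set (V2 r)) = (S : Set (V2 r))) :
    IFreeG 3 ((⇑F.mkQ '' E) \ {0}) := by
  classical
  rintro ⟨T, hT3, hTind, hTeq⟩
  have hSEF : ∀ s ∈ S, s ∈ E ∧ s ∈ F := fun s hs => by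
    rwa [← mem_coe, ← hEF] at hs
  have hfiber : ∀ t ∈ T, {e ∈ E | F.mkQ e = t}.Nonempty := fun t ht => by
    rw [← mem_coe, ← hTeq] at ht
    exact ht.1.1
  -- a pair of the circuit whose sum does not stabilise the part of `E` above any `t ∈ T`
  obtain ⟨x, hxS, y, hyS, hxy, hxyM⟩ := exists_pair_add_notMem hS5 hsum T hT3.le
    (fun t => shiftStabilizer {e ∈ E | F.mkQ e = t}) fun t ht z hz =>
      notMem_shiftStabilizer hTF (fun _ h => h.1) (hfiber t ht) (hSEF z hz).1
  obtain ⟨⟨hxE, hxF⟩, ⟨hyE, hyF⟩⟩ := And.intro (hSEF x hxS) (hSEF y hyS)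
  choose! e heE het hexy using fun t ht =>
    exists_add_notMem_of_notMem_shiftStabilizer (F.add_mem hxF hyF) (hxyM t ht)
  refine hI5 ⟨T.image e ∪ {x, y}, ?_, ?_, ?_⟩
  · rw [card_image_union_of_mkQ_eq hTind het (by rw [coe_pair]; exact Set.pair_subset hxF hyF),
      hT3, card_pair hxy]
  · show LinearIndepOn (ZMod 2) id ((T.image e ∪ {x, y} : Finset _) : Set (V2 r))
    rw [coe_union, coe_image, coe_pair]
    exact linearIndepOn_image_union hTind het (linearIndepOn_pair_zmod_two
      (fun h => h0 (h ▸ hxE)) (fun h => h0 (h ▸ hyE)) hxy) (Set.pair_subset hxF hyF)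
  · rw [coe_union, coe_image, coe_pair]
    exact inter_span_image_union_pair_eq h0 hTF hTeq hTind heE het hxE hyE hxF hyF hexy

theorem stmt13 {r : ℕ} (E : Set (V2 r)) (h0 : (0 : V2 r) ∉ E)
    (hTF : TriangleFree E) (hI5 : IFree 5 E)
    (F : Submodule (ZMod 2) (V2 r)) (hF : Module.finrank (ZMod 2) F = 4)
    (S : Finset (V2 r)) (hS5 : S.card = 5) (hSF : (S : Set (V2 r)) ⊆ (F : Set (V2 r)))
    (hsum : (∑ x ∈ S, x) = 0)
    (hind : ∀ T ⊆ S, T.card = 4 →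
      LinearIndependent (ZMod 2) (Subtype.val : ↥(T : Set (V2 r)) → V2 r))
    (hEF : E ∩ (F : Set (V2 r)) = (S : Set (V2 r))) :
    IFreeG 3 ((⇑F.mkQ '' E) \ {0}) :=
  stmt13_general E h0 hTF hI5 F S hS5 hsum hEF
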